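/- For every n ≥ 4 and every Brunnian braid β ∈ PB_n (i.e., p_m(β) = 1 for all m ∈ {1,…,n}), the element φ_n(β) ∈ G_n^3 is Brunnian, i.e., q_m(φ_n(β)) = 1 for all m ∈ {1,…,n}. -/

import Mathlib

namespace GnkBrunnian

/-! ## Index types for generators -/

/-- Validity of a pair index: `1 ≤ i < j ≤ n`. -/
abbrev P2ok (n : ℕ) (p : ℕ × ℕ) : Prop := 1 ≤ p.1 ∧ p.1 < p.2 ∧ p.2 ≤ n

/-- Index type for the generators `a_{ij}` of `G_n^2` (and `b_{ij}` of `PB_n`). -/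
abbrev PIdx (n : ℕ) := {p : ℕ × ℕ // P2ok n p}

/-- Validity of a triple index: `1 ≤ i < j < k ≤ n`. -/
abbrev T3ok (n : ℕ) (t : ℕ × ℕ × ℕ) : Prop :=
  1 ≤ t.1 ∧ t.1 < t.2.1 ∧ t.2.1 < t.2.2 ∧ t.2.2 ≤ n

/-- Index type for the generators `a_{ijk}` of `G_n^3`. -/
abbrev TIdx (n : ℕ) := {t : ℕ × ℕ × ℕ // T3ok n t}

def sort2 (a b : ℕ) : ℕ × ℕ := (min a b, max a b)

def sort3 (a b c : ℕ) : ℕ × ℕ × ℕ :=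
  (min a (min b c), a + b + c - min a (min b c) - max a (max b c), max a (max b c))

def pairSet {n : ℕ} (p : PIdx n) : Finset ℕ := {p.1.1, p.1.2}

def tripSet {n : ℕ} (t : TIdx n) : Finset ℕ := {t.1.1, t.1.2.1, t.1.2.2}

/-- Reindexing after deleting the strand `m` : indices above `m` are decreased by one. -/
def del (m x : ℕ) : ℕ := if m < x then x - 1 else x

/-! ## The group `G_n^2` -/

/-- The free-group letter `a_{\{a,b\}}` (trivial if the index is out of range). -/
def fgen2 (n a b : ℕ) : FreeGroup (PIdx n) :=
  if h : P2ok n (sort2 a b) then FreeGroup.of ⟨sort2 a b, h⟩ else 1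

/-- The defining relators of `G_n^2`. -/
def rels2 (n : ℕ) : Set (FreeGroup (PIdx n)) :=
  {r | ∃ a : PIdx n, r = .of a * .of a} ∪
  {r | ∃ i j k l : ℕ,
      1 ≤ i ∧ i ≤ n ∧ 1 ≤ j ∧ j ≤ n ∧ 1 ≤ k ∧ k ≤ n ∧ 1 ≤ l ∧ l ≤ n ∧
      i ≠ j ∧ i ≠ k ∧ i ≠ l ∧ j ≠ k ∧ j ≠ l ∧ k ≠ l ∧
      r = fgen2 n i j * fgen2 n k l * (fgen2 n i j)⁻¹ * (fgen2 n k l)⁻¹} ∪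
  {r | ∃ i j k : ℕ,
      1 ≤ i ∧ i ≤ n ∧ 1 ≤ j ∧ j ≤ n ∧ 1 ≤ k ∧ k ≤ n ∧ i ≠ j ∧ i ≠ k ∧ j ≠ k ∧
      r = fgen2 n i j * fgen2 n i k * fgen2 n j k *
          (fgen2 n j k * fgen2 n i k * fgen2 n i j)⁻¹}

/-- The group `G_n^2`. -/
abbrev G2 (n : ℕ) := PresentedGroup (rels2 n)

/-- The generator `a_{\{a,b\}}` of `G_n^2` (trivial if the index is out of range). -/
def ggen2 (n a b : ℕ) : G2 n :=
  if h : P2ok n (sort2 a b) then PresentedGroup.of ⟨sort2 a b, h⟩ else 1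

/-- The element of `G_n^2` represented by a word in the generators. -/
def toG2 {n : ℕ} (β : List (PIdx n)) : G2 n :=
  (β.map fun a => (PresentedGroup.of a : G2 n)).prod

/-! ## The group `G_n^3` -/

/-- The free-group letter `a_{\{a,b,c\}}` (trivial if the index is out of range). -/
def fgen3 (n a b c : ℕ) : FreeGroup (TIdx n) :=
  if h : T3ok n (sort3 a b c) then FreeGroup.of ⟨sort3 a b c, h⟩ else 1

/-- The defining relators of `G_n^3`. -/
def rels3 (n : ℕ) : Set (FreeGroup (TIdx n)) :=
  {r | ∃ a : TIdx n, r = .of a * .of a} ∪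
  {r | ∃ a b : TIdx n, (tripSet a ∩ tripSet b).card < 2 ∧
      r = .of a * .of b * (.of a)⁻¹ * (.of b)⁻¹} ∪
  {r | ∃ i j k l : ℕ,
      1 ≤ i ∧ i ≤ n ∧ 1 ≤ j ∧ j ≤ n ∧ 1 ≤ k ∧ k ≤ n ∧ 1 ≤ l ∧ l ≤ n ∧
      i ≠ j ∧ i ≠ k ∧ i ≠ l ∧ j ≠ k ∧ j ≠ l ∧ k ≠ l ∧
      r = fgen3 n i j k * fgen3 n i j l * fgen3 n i k l * fgen3 n j k l *
          (fgen3 n j k l * fgen3 n i k l * fgen3 n i j l * fgen3 n i j k)⁻¹}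

/-- The group `G_n^3`. -/
abbrev G3 (n : ℕ) := PresentedGroup (rels3 n)

/-- The generator `a_{\{a,b,c\}}` of `G_n^3` (trivial if the index is out of range). -/
def ggen3 (n a b c : ℕ) : G3 n :=
  if h : T3ok n (sort3 a b c) then PresentedGroup.of ⟨sort3 a b c, h⟩ else 1

/-- The element of `G_n^3` represented by a word in the generators. -/
def toG3 {n : ℕ} (β : List (TIdx n)) : G3 n :=
  (β.map fun a => (PresentedGroup.of a : G3 n)).prod

/-! ## The pure braid group `PB_n` (standard Artin/Birman presentation) -/

/-- The defining relators of the pure braid group on `n` strands, in the standard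
presentation on the generators `b_{ij} = A_{ij}`, `1 ≤ i < j ≤ n`. -/
def relsPB (n : ℕ) : Set (FreeGroup (PIdx n)) :=
  {x | ∃ r s i j : ℕ, P2ok n (r, s) ∧ P2ok n (i, j) ∧ (s < i ∨ (i < r ∧ s < j)) ∧
      x = (fgen2 n r s)⁻¹ * fgen2 n i j * fgen2 n r s * (fgen2 n i j)⁻¹} ∪
  {x | ∃ r s j : ℕ, 1 ≤ r ∧ r < s ∧ s < j ∧ j ≤ n ∧
      x = (fgen2 n r s)⁻¹ * fgen2 n s j * fgen2 n r s *
          (fgen2 n r j * fgen2 n s j * (fgen2 n r j)⁻¹)⁻¹} ∪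
  {x | ∃ r s j : ℕ, 1 ≤ r ∧ r < s ∧ s < j ∧ j ≤ n ∧
      x = (fgen2 n r s)⁻¹ * fgen2 n r j * fgen2 n r s *
          ((fgen2 n r j * fgen2 n s j) * fgen2 n r j * (fgen2 n r j * fgen2 n s j)⁻¹)⁻¹} ∪
  {x | ∃ r i s j : ℕ, 1 ≤ r ∧ r < i ∧ i < s ∧ s < j ∧ j ≤ n ∧
      x = (fgen2 n r s)⁻¹ * fgen2 n i j * fgen2 n r s *
          ((fgen2 n r j * fgen2 n s j * (fgen2 n r j)⁻¹ * (fgen2 n s j)⁻¹) * fgen2 n i j *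
           (fgen2 n r j * fgen2 n s j * (fgen2 n r j)⁻¹ * (fgen2 n s j)⁻¹)⁻¹)⁻¹}

/-- The pure braid group on `n` strands. -/
abbrev PB (n : ℕ) := PresentedGroup (relsPB n)

/-- The standard generator `b_{ij}` of `PB_n` (trivial if the index is out of range). -/
def pbgen (n a b : ℕ) : PB n :=
  if h : P2ok n (sort2 a b) then PresentedGroup.of ⟨sort2 a b, h⟩ else 1

/-! ## The elements `c^n_{i,j}` and the homomorphism `φ_n` -/

/-- `c^n_{i,j} = (∏_{k=j+1}^{n} a_{ijk}) * (∏_{k=1, k∉{i,j}}^{j-1} a_{ijk}) ∈ G_n^3`. -/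
def cElt (n i j : ℕ) : G3 n :=
  (((List.range' (j + 1) (n - j)).map fun k => ggen3 n i j k).prod) *
  (((List.range' 1 (j - 1)).map fun k => ggen3 n i j k).prod)

/-- The image of `b_{ij}` under `φ_n`:
`(c^n_{i,i+1})⁻¹ ⋯ (c^n_{i,j-1})⁻¹ (c^n_{i,j})² c^n_{i,j-1} ⋯ c^n_{i,i+1}`. -/
def phiElt (n i j : ℕ) : G3 n :=
  (((List.range' (i + 1) (j - 1 - i)).map fun m => (cElt n i m)⁻¹).prod) *
  (cElt n i j) ^ 2 *
  (((List.range' (i + 1) (j - 1 - i)).reverse.map fun m => cElt n i m).prod)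

/-- `q` is the strand-deletion homomorphism `q_m : G_n^3 → G_{n-1}^3`. -/
def IsShift3 (n m : ℕ) (q : G3 n →* G3 (n - 1)) : Prop :=
  ∀ i j k : ℕ, 1 ≤ i → i < j → j < k → k ≤ n →
    q (ggen3 n i j k) =
      if m = i ∨ m = j ∨ m = k then 1
      else ggen3 (n - 1) (del m i) (del m j) (del m k)

/-- `p` is the strand-deletion homomorphism `p_m : PB_n → PB_{n-1}`. -/
def IsShiftPB (n m : ℕ) (p : PB n →* PB (n - 1)) : Prop :=
  ∀ i j : ℕ, 1 ≤ i → i < j → j ≤ n →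
    p (pbgen n i j) =
      if m = i ∨ m = j then 1 else pbgen (n - 1) (del m i) (del m j)

/-- `φ` is the Manturov–Nikonov homomorphism `φ_n : PB_n → G_n^3`. -/
def IsPhi (n : ℕ) (φ : PB n →* G3 n) : Prop :=
  ∀ i j : ℕ, 1 ≤ i → i < j → j ≤ n → φ (pbgen n i j) = phiElt n i j

/-! ## Words and good condition -/

def good2 {n : ℕ} (β : List (PIdx n)) : Prop := ∀ a : PIdx n, Even (β.count a)

def good3 {n : ℕ} (β : List (TIdx n)) : Prop := ∀ a : TIdx n, Even (β.count a)

/-! ## Free products of copies of `ℤ/2` -/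

/-- The free product of copies of `ℤ/2ℤ` indexed by `ι`. -/
abbrev FP2 (ι : Type) := PresentedGroup {r : FreeGroup ι | ∃ a : ι, r = .of a * .of a}

/-- Indices `l ∈ {1,…,n} \ {i,j,k}`. -/
abbrev SIdx3 (n i j k : ℕ) := {l : ℕ // (1 ≤ l ∧ l ≤ n) ∧ l ≠ i ∧ l ≠ j ∧ l ≠ k}

/-- The group `F_n^3` (for the fixed triple `(i,j,k)`). -/
abbrev F3 (n i j k : ℕ) := FP2 (SIdx3 n i j k → ZMod 2 × ZMod 2)

/-- Indices `k ∈ {1,…,n} \ {i,j}`. -/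
abbrev SIdx2 (n i j : ℕ) := {l : ℕ // (1 ≤ l ∧ l ≤ n) ∧ l ≠ i ∧ l ≠ j}

/-- The group `F_n^2` (for the fixed pair `(i,j)`). -/
abbrev F2 (n i j : ℕ) := FP2 (SIdx2 n i j → ZMod 2)

/-! ## The MN-invariants `w_{(i,j)}` and `w_{(i,j,k)}` -/

/-- The number of occurrences of the generator `a_{\{a,b\}}` in a word over `G_n^2`. -/
def cnt2 {n : ℕ} (β : List (PIdx n)) (a b : ℕ) : ℕ :=
  (β.filter fun x => decide (pairSet x = ({a, b} : Finset ℕ))).length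

/-- The number of occurrences of the generator `a_{\{a,b,c\}}` in a word over `G_n^3`. -/
def cnt3 {n : ℕ} (β : List (TIdx n)) (a b c : ℕ) : ℕ :=
  (β.filter fun x => decide (tripSet x = ({a, b, c} : Finset ℕ))).length

/-- `i_c` for an occurrence of `a_{ij}` with prefix `pre`: `i_c(k) = N_{ik} + N_{jk} (mod 2)`. -/
def iC2 {n : ℕ} (i j : ℕ) (pre : List (PIdx n)) : SIdx2 n i j → ZMod 2 :=
  fun k => ((cnt2 pre i k.1 + cnt2 pre j k.1 : ℕ) : ZMod 2)

/-- The MN-invariant `w_{(i,j)}` of a word over `G_n^2`. -/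
def w2 {n : ℕ} (i j : ℕ) (β : List (PIdx n)) : F2 n i j :=
  (((β.zipIdx.map Prod.swap).filter fun x => decide (pairSet x.2 = ({i, j} : Finset ℕ))).map
    fun x => (PresentedGroup.of (iC2 i j (β.take x.1)) : F2 n i j)).prod

/-- `i_c` for an occurrence of `a_{ijk}` with prefix `pre`:
`i_c(l) = (N_{jkl} + N_{ijl}, N_{ikl} + N_{ijl}) (mod 2)`. -/
def iC3 {n : ℕ} (i j k : ℕ) (pre : List (TIdx n)) : SIdx3 n i j k → ZMod 2 × ZMod 2 :=
  fun l => (((cnt3 pre j k l.1 + cnt3 pre i j l.1 : ℕ) : ZMod 2),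
            ((cnt3 pre i k l.1 + cnt3 pre i j l.1 : ℕ) : ZMod 2))

/-- The MN-invariant `w_{(i,j,k)}` of a word over `G_n^3`. -/
def w3 {n : ℕ} (i j k : ℕ) (β : List (TIdx n)) : F3 n i j k :=
  (((β.zipIdx.map Prod.swap).filter fun x => decide (tripSet x.2 = ({i, j, k} : Finset ℕ))).map
    fun x => (PresentedGroup.of (iC3 i j k (β.take x.1)) : F3 n i j k)).prod

/-! ## Explicit words for `c^n_{i,j}` and `φ_n(b_{ij})` -/

def tripMkS (n a b c : ℕ) : Option (TIdx n) :=
  if h : T3ok n (sort3 a b c) then some ⟨sort3 a b c, h⟩ else none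

def pairMkS (n a b : ℕ) : Option (PIdx n) :=
  if h : P2ok n (sort2 a b) then some ⟨sort2 a b, h⟩ else none

/-- The defining word of `c^n_{i,j}`. -/
def cWord (n i j : ℕ) : List (TIdx n) :=
  ((List.range' (j + 1) (n - j)).filterMap fun k => tripMkS n i j k) ++
  ((List.range' 1 (j - 1)).filterMap fun k => tripMkS n i j k)

/-- The defining word of `φ_n(b_{ij})`, with the inverses of the `c`-words expanded using
`a⁻¹ = a` for generators (i.e. by reversing the words). -/
def phiWord (n i j : ℕ) : List (TIdx n) :=
  (((List.range' (i + 1) (j - 1 - i)).map fun m => (cWord n i m).reverse).flatten) ++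
  cWord n i j ++ cWord n i j ++
  (((List.range' (i + 1) (j - 1 - i)).reverse.map fun m => cWord n i m).flatten)

/-! ## The group `G_{n,p}^2` (parity) -/

/-- Index type for the generators `a_{ij}^ε` of `G_{n,p}^2`. -/
abbrev PPIdx (n : ℕ) := PIdx n × ZMod 2

def fgenP2 (n a b : ℕ) (e : ZMod 2) : FreeGroup (PPIdx n) :=
  if h : P2ok n (sort2 a b) then FreeGroup.of (⟨sort2 a b, h⟩, e) else 1

/-- The defining relators of `G_{n,p}^2`. -/
def relsP2 (n : ℕ) : Set (FreeGroup (PPIdx n)) :=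
  {r | ∃ a : PPIdx n, r = .of a * .of a} ∪
  {r | ∃ (i j k l : ℕ) (e e' : ZMod 2),
      1 ≤ i ∧ i ≤ n ∧ 1 ≤ j ∧ j ≤ n ∧ 1 ≤ k ∧ k ≤ n ∧ 1 ≤ l ∧ l ≤ n ∧
      i ≠ j ∧ i ≠ k ∧ i ≠ l ∧ j ≠ k ∧ j ≠ l ∧ k ≠ l ∧
      r = fgenP2 n i j e * fgenP2 n k l e' * (fgenP2 n i j e)⁻¹ * (fgenP2 n k l e')⁻¹} ∪
  {r | ∃ (i j k : ℕ) (e1 e2 e3 : ZMod 2),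
      1 ≤ i ∧ i < j ∧ j < k ∧ k ≤ n ∧ e1 + e2 + e3 = 0 ∧
      r = fgenP2 n i j e1 * fgenP2 n i k e2 * fgenP2 n j k e3 *
          (fgenP2 n j k e3 * fgenP2 n i k e2 * fgenP2 n i j e1)⁻¹}

/-- The group `G_{n,p}^2`. -/
abbrev GP2 (n : ℕ) := PresentedGroup (relsP2 n)

/-- The element of `G_{n,p}^2` represented by a word in the generators. -/
def toGP2 {n : ℕ} (β : List (PPIdx n)) : GP2 n :=
  (β.map fun a => (PresentedGroup.of a : GP2 n)).prod

/-! ## The parity invariant `w^p_{ij}` on `G_{n,p}^2` -/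

/-- The number of occurrences of `a_{\{a,b\}}^e` in a word over `G_{n,p}^2`. -/
def cntP2 {n : ℕ} (β : List (PPIdx n)) (a b : ℕ) (e : ZMod 2) : ℕ :=
  (β.filter fun x => decide (pairSet x.1 = ({a, b} : Finset ℕ) ∧ x.2 = e)).length

/-- `i^p_c` for an occurrence of `a_{ij}^e` with prefix `pre`. -/
def iCP2 {n : ℕ} (i j : ℕ) (e : ZMod 2) (pre : List (PPIdx n)) : SIdx2 n i j → ZMod 2 :=
  fun k =>
    if e = 0 then ((cntP2 pre i k.1 0 + cntP2 pre j k.1 0 : ℕ) : ZMod 2)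
    else ((cntP2 pre i k.1 0 + cntP2 pre j k.1 1 : ℕ) : ZMod 2)

/-- The invariant `w^p_{ij}` of a word over `G_{n,p}^2`. -/
def wP2 {n : ℕ} (i j : ℕ) (β : List (PPIdx n)) : F2 n i j :=
  (((β.zipIdx.map Prod.swap).filter fun x => decide (pairSet x.2.1 = ({i, j} : Finset ℕ))).map
    fun x => (PresentedGroup.of (iCP2 i j x.2.2 (β.take x.1)) : F2 n i j)).prod

/-! ## The map `ψ_l : G_{n+1}^2 → G_{n,p}^2` -/

/-- The word over `G_{n,p}^2` obtained from a word over `G_{n+1}^2` by deleting the strand `l`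
and recording parities. -/
def psiWord (n l : ℕ) (β : List (PIdx (n + 1))) : List (PPIdx n) :=
  (β.zipIdx.map Prod.swap).filterMap fun x =>
    if l = x.2.1.1 ∨ l = x.2.1.2 then none
    else (pairMkS n (del l x.2.1.1) (del l x.2.1.2)).map fun p =>
      (p, ((cnt2 (β.take x.1) x.2.1.1 l + cnt2 (β.take x.1) x.2.1.2 l : ℕ) : ZMod 2))

/-! ## The group `G_{n,p}^3` (parity) -/

/-- Index type for the generators `a_{ijk}^ε` of `G_{n,p}^3`. -/
abbrev TPIdx (n : ℕ) := TIdx n × ZMod 2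

def fgenP3 (n a b c : ℕ) (e : ZMod 2) : FreeGroup (TPIdx n) :=
  if h : T3ok n (sort3 a b c) then FreeGroup.of (⟨sort3 a b c, h⟩, e) else 1

/-- The defining relators of `G_{n,p}^3`. -/
def relsP3 (n : ℕ) : Set (FreeGroup (TPIdx n)) :=
  {r | ∃ a : TPIdx n, r = .of a * .of a} ∪
  {r | ∃ a b : TPIdx n, (tripSet a.1 ∩ tripSet b.1).card < 2 ∧
      r = (.of a * .of b) ^ 2} ∪
  {r | ∃ (i j k l : ℕ) (ei ej ek el : ZMod 2),
      1 ≤ i ∧ i ≤ n ∧ 1 ≤ j ∧ j ≤ n ∧ 1 ≤ k ∧ k ≤ n ∧ 1 ≤ l ∧ l ≤ n ∧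
      i ≠ j ∧ i ≠ k ∧ i ≠ l ∧ j ≠ k ∧ j ≠ l ∧ k ≠ l ∧
      (if max (max i j) (max k l) = i then ej + ek + el
       else if max (max i j) (max k l) = j then ei + ek + el
       else if max (max i j) (max k l) = k then ei + ej + el
       else ei + ej + ek) = 0 ∧
      r = (fgenP3 n i j k el * fgenP3 n i j l ek * fgenP3 n i k l ej * fgenP3 n j k l ei) ^ 2}

/-- The group `G_{n,p}^3`. -/
abbrev GP3 (n : ℕ) := PresentedGroup (relsP3 n)

/-- The element of `G_{n,p}^3` represented by a word in the generators. -/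
def toGP3 {n : ℕ} (β : List (TPIdx n)) : GP3 n :=
  (β.map fun a => (PresentedGroup.of a : GP3 n)).prod

/-! ## The map `f : G_{n+1}^3 → G_{n,p}^3` -/

/-- The word over `G_{n,p}^3` obtained from a word over `G_{n+1}^3` by deleting the letters
containing the index `n+1` and recording parities. -/
def fWord (n : ℕ) (β : List (TIdx (n + 1))) : List (TPIdx n) :=
  (β.zipIdx.map Prod.swap).filterMap fun x =>
    if x.2.1.2.2 = n + 1 then none
    else (tripMkS n x.2.1.1 x.2.1.2.1 x.2.1.2.2).map fun t =>
      (t, ((cnt3 (β.take x.1) x.2.1.2.1 x.2.1.2.2 (n + 1) +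
            cnt3 (β.take x.1) x.2.1.1 x.2.1.2.2 (n + 1) : ℕ) : ZMod 2))

/-! ## The parity invariant `w^p_{ijk}` on `G_{n,p}^3` -/

/-- The group `F_n^3` with values in `ℤ/2` (for the parity invariant). -/
abbrev F3p (n i j k : ℕ) := FP2 (SIdx3 n i j k → ZMod 2)

/-- The number of occurrences of `a_{\{a,b,c\}}^e` in a word over `G_{n,p}^3`. -/
def cntP3 {n : ℕ} (β : List (TPIdx n)) (a b c : ℕ) (e : ZMod 2) : ℕ :=
  (β.filter fun x => decide (tripSet x.1 = ({a, b, c} : Finset ℕ) ∧ x.2 = e)).length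

/-- `i^p_c` for an occurrence of `a_{ijk}^e` with prefix `pre` (here `k > i, j`). -/
def iCP3 {n : ℕ} (i j k : ℕ) (e : ZMod 2) (pre : List (TPIdx n)) : SIdx3 n i j k → ZMod 2 :=
  fun l =>
    if e = 0 then
      (if k < l.1 then
        ((cntP3 pre i k l.1 0 + cntP3 pre j k l.1 0 + cntP3 pre i j l.1 1 : ℕ) : ZMod 2)
      else ((cntP3 pre i k l.1 0 + cntP3 pre j k l.1 0 : ℕ) : ZMod 2))
    else
      (if k < l.1 then
        ((cntP3 pre i k l.1 0 + cntP3 pre j k l.1 1 + cntP3 pre i j l.1 0 : ℕ) : ZMod 2)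
      else ((cntP3 pre i k l.1 0 + cntP3 pre j k l.1 1 : ℕ) : ZMod 2))

/-- The invariant `w^p_{ijk}` of a word over `G_{n,p}^3`. -/
def wP3 {n : ℕ} (i j k : ℕ) (β : List (TPIdx n)) : F3p n i j k :=
  (((β.zipIdx.map Prod.swap).filter fun x => decide (tripSet x.2.1 = ({i, j, k} : Finset ℕ))).map
    fun x => (PresentedGroup.of (iCP3 i j k x.2.2 (β.take x.1)) : F3p n i j k)).prod

/-!
The kernel of the strand deletion `p_m` is normally generated by the generators `b_{ij}` with
`m ∈ {i, j}`: inserting a strand at position `m` gives a homomorphism `PB_{n-1} → PB_n` that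
splits `p_m` modulo these generators. On the other hand `φ_n(b_{ij})` is a conjugate of
`(c^n_{i,j})²`, and every letter `a_{ijk}` of `c^n_{i,j}` is killed by `q_m` when `m ∈ {i, j}`.
Hence `q_m ∘ φ_n` kills the kernel of `p_m`.
-/

lemma pbgen_eq_of {n a b : ℕ} (h : P2ok n (a, b)) :
    pbgen n a b = PresentedGroup.of (⟨(a, b), h⟩ : PIdx n) := by
  have hs : sort2 a b = (a, b) := by
    simp only [sort2, Prod.mk.injEq]
    omega
  unfold pbgen
  rw [hs]
  exact dif_pos h

lemma ggen3_eq_of {n : ℕ} {t : ℕ × ℕ × ℕ} (h : T3ok n t) :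
    ggen3 n t.1 t.2.1 t.2.2 = PresentedGroup.of (⟨t, h⟩ : TIdx n) := by
  obtain ⟨a, b, c⟩ := t
  have hs : sort3 a b c = (a, b, c) := by
    have hlt : a < b ∧ b < c := ⟨h.2.1, h.2.2.1⟩
    simp only [sort3, Prod.mk.injEq]
    omega
  unfold ggen3
  rw [hs]
  exact dif_pos h

lemma phiElt_eq_conj (n i j : ℕ) :
    phiElt n i j =
      (((List.range' (i + 1) (j - 1 - i)).reverse.map fun m => cElt n i m).prod)⁻¹ *
        cElt n i j ^ 2 *
          ((List.range' (i + 1) (j - 1 - i)).reverse.map fun m => cElt n i m).prod := by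
  simp only [phiElt, List.prod_inv_reverse, List.map_reverse, List.reverse_reverse, List.map_map,
    Function.comp_def]

namespace IsShift3

variable {n m : ℕ} {q : G3 n →* G3 (n - 1)}

lemma map_ggen3 (hq : IsShift3 n m q) {i j k : ℕ} (hm : m = i ∨ m = j ∨ m = k) :
    q (ggen3 n i j k) = 1 := by
  by_cases h : T3ok n (sort3 i j k)
  · have hs : m = (sort3 i j k).1 ∨ m = (sort3 i j k).2.1 ∨ m = (sort3 i j k).2.2 := by
      simp only [sort3]
      omega
    rw [ggen3, dif_pos h, ← ggen3_eq_of h, hq _ _ _ h.1 h.2.1 h.2.2.1 h.2.2.2, if_pos hs]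
  · rw [ggen3, dif_neg h, map_one]

lemma map_cElt (hq : IsShift3 n m q) {i j : ℕ} (hm : m = i ∨ m = j) : q (cElt n i j) = 1 := by
  simp only [cElt, map_mul, map_list_prod, List.map_map]
  rw [List.prod_eq_one, List.prod_eq_one, one_mul] <;>
  · simp only [List.mem_map, Function.comp_apply]
    rintro _ ⟨k, -, rfl⟩
    exact hq.map_ggen3 (by tauto)

lemma map_phiElt (hq : IsShift3 n m q) {i j : ℕ} (hm : m = i ∨ m = j) :
    q (phiElt n i j) = 1 := by
  rw [phiElt_eq_conj, map_mul, map_mul, map_inv, map_pow, hq.map_cElt hm, one_pow, mul_one,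
    inv_mul_cancel]

end IsShift3

/-- Renumbering of strands when a strand is inserted at position `m` (cf. `Fin.succAbove`). -/
def succAbove (m x : ℕ) : ℕ := if x < m then x else x + 1

lemma succAbove_del {m x : ℕ} (h : m ≠ x) : succAbove m (del m x) = x := by
  unfold succAbove del
  split_ifs <;> omega

lemma P2ok_succAbove_iff {n m a b : ℕ} (hm1 : 1 ≤ m) (hmn : m ≤ n) :
    P2ok n (succAbove m a, succAbove m b) ↔ P2ok (n - 1) (a, b) := by
  unfold succAbove
  split_ifs <;> omega

lemma sort2_succAbove (m a b : ℕ) :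
    sort2 (succAbove m a) (succAbove m b) = (succAbove m (min a b), succAbove m (max a b)) := by
  simp only [sort2, succAbove, Prod.mk.injEq]
  split_ifs <;> omega

def succAbovePair {n m : ℕ} (hm1 : 1 ≤ m) (hmn : m ≤ n) (x : PIdx (n - 1)) : PIdx n :=
  ⟨(succAbove m x.1.1, succAbove m x.1.2), (P2ok_succAbove_iff hm1 hmn).2 x.2⟩

section InsertStrand

variable {n m : ℕ} (hm1 : 1 ≤ m) (hmn : m ≤ n)

lemma map_succAbovePair_fgen2 (a b : ℕ) :
    FreeGroup.map (succAbovePair hm1 hmn) (fgen2 (n - 1) a b) =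
      fgen2 n (succAbove m a) (succAbove m b) := by
  have hsort := sort2_succAbove m a b
  by_cases h : P2ok (n - 1) (sort2 a b)
  · have h' : P2ok n (sort2 (succAbove m a) (succAbove m b)) := by
      rw [hsort]
      exact (P2ok_succAbove_iff hm1 hmn).2 h
    rw [fgen2, fgen2, dif_pos h, dif_pos h', FreeGroup.map.of]
    exact congrArg FreeGroup.of (Subtype.ext hsort.symm)
  · have h' : ¬ P2ok n (sort2 (succAbove m a) (succAbove m b)) := by
      rw [hsort, P2ok_succAbove_iff hm1 hmn]
      exact h
    rw [fgen2, fgen2, dif_neg h, dif_neg h', map_one]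

lemma map_succAbovePair_mem_relsPB {r : FreeGroup (PIdx (n - 1))} (hr : r ∈ relsPB (n - 1)) :
    FreeGroup.map (succAbovePair hm1 hmn) r ∈ relsPB n := by
  rcases hr with (((⟨r, s, i, j, h1, h2, hc, rfl⟩ | ⟨r, s, j, h1, h2, h3, h4, rfl⟩) |
    ⟨r, s, j, h1, h2, h3, h4, rfl⟩) | ⟨r, i, s, j, h1, h2, h3, h4, h5, rfl⟩) <;>
  simp only [map_mul, map_inv, map_succAbovePair_fgen2]
  · exact Or.inl (Or.inl (Or.inl ⟨_, _, _, _, (P2ok_succAbove_iff hm1 hmn).2 h1,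
      (P2ok_succAbove_iff hm1 hmn).2 h2, by unfold succAbove; split_ifs <;> omega, rfl⟩))
  · refine Or.inl (Or.inl (Or.inr ⟨_, _, _, ?_, ?_, ?_, ?_, rfl⟩)) <;>
      unfold succAbove <;> split_ifs <;> omega
  · refine Or.inl (Or.inr ⟨_, _, _, ?_, ?_, ?_, ?_, rfl⟩) <;>
      unfold succAbove <;> split_ifs <;> omega
  · refine Or.inr ⟨_, _, _, _, ?_, ?_, ?_, ?_, ?_, rfl⟩ <;>
      unfold succAbove <;> split_ifs <;> omega

def insertStrand : PB (n - 1) →* PB n :=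
  PresentedGroup.toGroup (f := fun x => PresentedGroup.of (succAbovePair hm1 hmn x)) fun r hr => by
    have hlift : FreeGroup.lift (fun x => PresentedGroup.of (succAbovePair hm1 hmn x)) =
        (PresentedGroup.mk (relsPB n)).comp (FreeGroup.map (succAbovePair hm1 hmn)) :=
      FreeGroup.ext_hom _ _ fun _ => rfl
    rw [hlift, MonoidHom.comp_apply]
    exact PresentedGroup.one_of_mem (map_succAbovePair_mem_relsPB hm1 hmn hr)

lemma insertStrand_pbgen {a b : ℕ} (h : P2ok (n - 1) (a, b)) :
    insertStrand hm1 hmn (pbgen (n - 1) a b) = pbgen n (succAbove m a) (succAbove m b) := by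
  rw [pbgen_eq_of h, insertStrand, PresentedGroup.toGroup.of,
    pbgen_eq_of ((P2ok_succAbove_iff hm1 hmn).2 h)]
  rfl

end InsertStrand

def strandGens (n m : ℕ) : Set (PB n) :=
  {x | ∃ i j : ℕ, P2ok n (i, j) ∧ (m = i ∨ m = j) ∧ x = pbgen n i j}

lemma IsShiftPB.mem_normalClosure_of_eq_one {n m : ℕ} {p : PB n →* PB (n - 1)}
    (hp : IsShiftPB n m p) (hm1 : 1 ≤ m) (hmn : m ≤ n) {β : PB n} (hβ : p β = 1) :
    β ∈ Subgroup.normalClosure (strandGens n m) := by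
  set N := Subgroup.normalClosure (strandGens n m)
  have hsplit : (QuotientGroup.mk' N).comp ((insertStrand hm1 hmn).comp p) =
      QuotientGroup.mk' N := by
    refine PresentedGroup.ext fun ⟨(i, j), hij⟩ => ?_
    rw [MonoidHom.comp_apply, MonoidHom.comp_apply, ← pbgen_eq_of hij,
      hp i j hij.1 hij.2.1 hij.2.2]
    by_cases hm : m = i ∨ m = j
    · rw [if_pos hm, map_one, map_one, eq_comm, QuotientGroup.mk'_apply,
        QuotientGroup.eq_one_iff]
      exact Subgroup.subset_normalClosure ⟨i, j, hij, hm, rfl⟩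
    · push Not at hm
      have hdel : P2ok (n - 1) (del m i, del m j) := by
        unfold del
        split_ifs <;> omega
      rw [if_neg (by tauto), insertStrand_pbgen hm1 hmn hdel, succAbove_del hm.1,
        succAbove_del hm.2]
  have h := DFunLike.congr_fun hsplit β
  rw [MonoidHom.comp_apply, MonoidHom.comp_apply, hβ, map_one, map_one, eq_comm,
    QuotientGroup.mk'_apply, QuotientGroup.eq_one_iff] at h
  exact h

lemma normalClosure_strandGens_le_ker {n m : ℕ} {q : G3 n →* G3 (n - 1)} {φ : PB n →* G3 n}
    (hq : IsShift3 n m q) (hφ : IsPhi n φ) :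
    Subgroup.normalClosure (strandGens n m) ≤ (q.comp φ).ker := by
  refine Subgroup.normalClosure_le_normal ?_
  rintro _ ⟨i, j, hij, hm, rfl⟩
  rw [SetLike.mem_coe, MonoidHom.mem_ker, MonoidHom.comp_apply, hφ i j hij.1 hij.2.1 hij.2.2]
  exact hq.map_phiElt hm

theorem statement_5_general (n : ℕ)
    (p : ℕ → (PB n →* PB (n - 1))) (hp : ∀ m, 1 ≤ m → m ≤ n → IsShiftPB n m (p m))
    (q : ℕ → (G3 n →* G3 (n - 1))) (hq : ∀ m, 1 ≤ m → m ≤ n → IsShift3 n m (q m))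
    (φ : PB n →* G3 n) (hφ : IsPhi n φ)
    (β : PB n) (hβ : ∀ m, 1 ≤ m → m ≤ n → p m β = 1) :
    ∀ m, 1 ≤ m → m ≤ n → q m (φ β) = 1 := fun m hm1 hmn =>
  normalClosure_strandGens_le_ker (hq m hm1 hmn) hφ
    ((hp m hm1 hmn).mem_normalClosure_of_eq_one hm1 hmn (hβ m hm1 hmn))

theorem statement_5 (n : ℕ) (hn : 4 ≤ n)
    (p : ℕ → (PB n →* PB (n - 1))) (hp : ∀ m, 1 ≤ m → m ≤ n → IsShiftPB n m (p m))
    (q : ℕ → (G3 n →* G3 (n - 1))) (hq : ∀ m, 1 ≤ m → m ≤ n → IsShift3 n m (q m))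
    (φ : PB n →* G3 n) (hφ : IsPhi n φ)
    (β : PB n) (hβ : ∀ m, 1 ≤ m → m ≤ n → p m β = 1) :
    ∀ m, 1 ≤ m → m ≤ n → q m (φ β) = 1 :=
  statement_5_general n p hp q hq φ hφ β hβ

end GnkBrunnian
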